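/- For t in the open cube (0,1)^J, the objective f_λ(t) = (1/n)‖y − X_t β̃_t‖₂² + λ Σ_j √(p_j) t_j has gradient with j-th coordinate 2[β̃_{t,j}^T (a_{t,j} − d_{t,j}) − b_{t,j}^T c_{t,j}] + λ√(p_j), where a_t = (X^T X/n) η_t − X^T y/n, b_t = a_t − η_t, c_t = L_t^{-1}(the vector with group-j block t_j · a_{t,j}), d_t = Z·(the vector with group-j block t_j · c_{t,j}), η_t = T_t β̃_t, and subscript j denotes the block of coordinates in group j. -/

import Mathlib

open Matrix Finset

/-- Group-structured diagonal matrix `T_t` repeating each `t j` over group `j`. -/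
noncomputable def Tmat {p J : ℕ} (g : Fin p → Fin J) (t : Fin J → ℝ) :
    Matrix (Fin p) (Fin p) ℝ :=
  Matrix.diagonal fun i => t (g i)

/-- `Z = (1/n) Xᵀ X − I`. -/
noncomputable def Zmat {n p : ℕ} (X : Matrix (Fin n) (Fin p) ℝ) :
    Matrix (Fin p) (Fin p) ℝ :=
  ((1 : ℝ) / n) • (Xᵀ * X) - 1

/-- `L_t = T_t Z T_t + I`. -/
noncomputable def Lmat {n p J : ℕ} (X : Matrix (Fin n) (Fin p) ℝ)
    (g : Fin p → Fin J) (t : Fin J → ℝ) : Matrix (Fin p) (Fin p) ℝ :=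
  Tmat g t * Zmat X * Tmat g t + 1

/-- `β̃_t = L_t⁻¹ ((1/n) X_tᵀ y)` with `X_t = X T_t`. -/
noncomputable def betaT {n p J : ℕ} (X : Matrix (Fin n) (Fin p) ℝ)
    (g : Fin p → Fin J) (y : Fin n → ℝ) (t : Fin J → ℝ) : Fin p → ℝ :=
  (Lmat X g t)⁻¹.mulVec (((1 : ℝ) / n) • ((X * Tmat g t)ᵀ.mulVec y))

/-- `η_t = T_t β̃_t`. -/
noncomputable def etaT {n p J : ℕ} (X : Matrix (Fin n) (Fin p) ℝ)
    (g : Fin p → Fin J) (y : Fin n → ℝ) (t : Fin J → ℝ) : Fin p → ℝ :=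
  (Tmat g t).mulVec (betaT X g y t)

/-- `a_t = (Xᵀ X / n) η_t − Xᵀ y / n`. -/
noncomputable def aT {n p J : ℕ} (X : Matrix (Fin n) (Fin p) ℝ)
    (g : Fin p → Fin J) (y : Fin n → ℝ) (t : Fin J → ℝ) : Fin p → ℝ :=
  ((1 : ℝ) / n) • (Xᵀ * X).mulVec (etaT X g y t) - ((1 : ℝ) / n) • Xᵀ.mulVec y

/-- `b_t = a_t − η_t`. -/
noncomputable def bT {n p J : ℕ} (X : Matrix (Fin n) (Fin p) ℝ)
    (g : Fin p → Fin J) (y : Fin n → ℝ) (t : Fin J → ℝ) : Fin p → ℝ :=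
  aT X g y t - etaT X g y t

/-- `c_t = L_t⁻¹ (t ⊙ a_t)`, where `t ⊙ v` has group-`j` block `t_j v_j`. -/
noncomputable def cT {n p J : ℕ} (X : Matrix (Fin n) (Fin p) ℝ)
    (g : Fin p → Fin J) (y : Fin n → ℝ) (t : Fin J → ℝ) : Fin p → ℝ :=
  (Lmat X g t)⁻¹.mulVec fun i => t (g i) * aT X g y t i

/-- `d_t = Z (t ⊙ c_t)`. -/
noncomputable def dT {n p J : ℕ} (X : Matrix (Fin n) (Fin p) ℝ)
    (g : Fin p → Fin J) (y : Fin n → ℝ) (t : Fin J → ℝ) : Fin p → ℝ :=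
  (Zmat X).mulVec fun i => t (g i) * cT X g y t i

/-!
Along the curve `x ↦ Function.update t j x`, the matrix `T_t` moves with velocity
`E = Tmat g (Pi.single j 1)`, so `L_t` moves with velocity `L' = E Z T + T Z E`, and differentiating
`L_t β̃_t = (1/n) T_t Xᵀ y` gives `β̃' = L⁻¹ ((1/n) E Xᵀ y - L' β̃)`; the inverse is differentiable
because `L_t = (1/n) (X T)ᵀ (X T) + (I - T²)` is positive definite on the open cube.
The derivative of the mean squared residual is `-(2/n) ⟨y - X η, X η'⟩ = 2 ⟨a, η'⟩` with
`η' = E β̃ + T β̃'`, and moving the symmetric matrices `L⁻¹`, `Z`, `T`, `E` across the inner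
products turns `⟨a, η'⟩` into `⟨β̃, E (a - d)⟩ - ⟨b, E c⟩`. Against `E` these inner products are the
sums over group `j`.
-/

theorem Matrix.IsSymm.dotProduct_mulVec {m R : Type*} [Fintype m] [CommSemiring R]
    {S : Matrix m m R} (hS : S.IsSymm) (u v : m → R) : u ⬝ᵥ S *ᵥ v = S *ᵥ u ⬝ᵥ v := by
  rw [Matrix.dotProduct_mulVec, ← mulVec_transpose, hS.eq]

section MatrixCalculus

variable {𝕜 : Type*} [NontriviallyNormedField 𝕜] {x : 𝕜}

theorem Matrix.hasDerivAt_iff {m n : Type*} [Fintype n] {A : 𝕜 → Matrix m n 𝕜}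
    {A' : Matrix m n 𝕜} :
    HasDerivAt A A' x ↔ ∀ i k, HasDerivAt (fun x => A x i k) (A' i k) x :=
  hasDerivAt_pi.trans <| forall_congr' fun _ => hasDerivAt_pi

theorem HasDerivAt.matrix_mul {l m n : Type*} [Fintype m] [Fintype n] {A : 𝕜 → Matrix l m 𝕜}
    {B : 𝕜 → Matrix m n 𝕜} {A' : Matrix l m 𝕜} {B' : Matrix m n 𝕜}
    (hA : HasDerivAt A A' x) (hB : HasDerivAt B B' x) :
    HasDerivAt (fun x => A x * B x) (A' * B x + A x * B') x := by
  rw [Matrix.hasDerivAt_iff] at hA hB ⊢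
  intro i k
  simpa only [mul_apply, Matrix.add_apply, ← sum_add_distrib] using
    HasDerivAt.fun_sum fun j _ => (hA i j).fun_mul (hB j k)

theorem HasDerivAt.matrix_mulVec {m n : Type*} [Fintype n] {A : 𝕜 → Matrix m n 𝕜}
    {v : 𝕜 → n → 𝕜} {A' : Matrix m n 𝕜} {v' : n → 𝕜}
    (hA : HasDerivAt A A' x) (hv : HasDerivAt v v' x) :
    HasDerivAt (fun x => A x *ᵥ v x) (A' *ᵥ v x + A x *ᵥ v') x := by
  rw [Matrix.hasDerivAt_iff] at hA
  rw [hasDerivAt_pi] at hv ⊢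
  intro i
  simpa only [mulVec, dotProduct, Pi.add_apply, ← sum_add_distrib] using
    HasDerivAt.fun_sum fun k _ => (hA i k).fun_mul (hv k)

end MatrixCalculus

section MatrixInverse

-- Any normed-algebra structure will do: `HasDerivAt` only sees the (product) topology.
attribute [local instance] Matrix.linftyOpNormedAddCommGroup Matrix.linftyOpNormedSpace
  Matrix.linftyOpNormedRing Matrix.linftyOpNormedAlgebra

theorem HasDerivAt.matrix_inv {𝕜 m : Type*} [RCLike 𝕜] [Fintype m] [DecidableEq m] {x : 𝕜}
    {A : 𝕜 → Matrix m m 𝕜} {A' : Matrix m m 𝕜} (hA : HasDerivAt A A' x) (hAx : IsUnit (A x)) :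
    HasDerivAt (fun x => (A x)⁻¹) (-((A x)⁻¹ * A' * (A x)⁻¹)) x := by
  have hinv := hasFDerivAt_ringInverse (𝕜 := 𝕜) hAx.unit
  have hunit := Ring.inverse_unit hAx.unit
  rw [hAx.unit_spec] at hinv hunit
  simp only [nonsing_inv_eq_ringInverse, hunit]
  exact hinv.comp_hasDerivAt x hA

end MatrixInverse

section GroupScaling

variable {n p J : ℕ} (X : Matrix (Fin n) (Fin p) ℝ) (g : Fin p → Fin J) (y : Fin n → ℝ)

theorem Tmat_isSymm (t : Fin J → ℝ) : (Tmat g t).IsSymm :=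
  isSymm_diagonal _

theorem Tmat_mulVec (t : Fin J → ℝ) (v : Fin p → ℝ) :
    Tmat g t *ᵥ v = fun i => t (g i) * v i :=
  funext fun i => mulVec_diagonal _ _ i

theorem dotProduct_Tmat_single_mulVec (j : Fin J) (u v : Fin p → ℝ) :
    u ⬝ᵥ Tmat g (Pi.single j 1) *ᵥ v = ∑ i ∈ univ.filter fun i => g i = j, u i * v i := by
  simp only [dotProduct, Tmat_mulVec, sum_filter, Pi.single_apply]
  refine sum_congr rfl fun i _ => ?_
  split_ifs <;> simp

theorem Zmat_isSymm : (Zmat X).IsSymm := by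
  simp [IsSymm, Zmat, transpose_sub, transpose_smul, transpose_mul]

theorem Lmat_isSymm (t : Fin J → ℝ) : (Lmat X g t).IsSymm := by
  simp [IsSymm, Lmat, transpose_mul, (Tmat_isSymm g t).eq, (Zmat_isSymm X).eq, Matrix.mul_assoc]

theorem Lmat_eq_smul_gram_add_diagonal (t : Fin J → ℝ) :
    Lmat X g t = ((1 : ℝ) / n) • ((X * Tmat g t)ᵀ * (X * Tmat g t)) +
      diagonal fun i => 1 - t (g i) ^ 2 := by
  have hdiag : (diagonal fun i => 1 - t (g i) ^ 2) = 1 - Tmat g t * Tmat g t := by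
    rw [Tmat, diagonal_mul_diagonal, ← diagonal_one, diagonal_sub]
    simp only [sq]
  rw [hdiag, Lmat, Zmat, transpose_mul, (Tmat_isSymm g t).eq, Matrix.mul_sub, Matrix.sub_mul,
    Matrix.mul_smul, Matrix.smul_mul, Matrix.mul_one]
  simp only [Matrix.mul_assoc]
  abel

theorem Lmat_posDef {t : Fin J → ℝ} (ht : ∀ j, |t j| < 1) : (Lmat X g t).PosDef := by
  rw [Lmat_eq_smul_gram_add_diagonal]
  refine PosDef.posSemidef_add ?_ (PosDef.diagonal fun i => ?_)
  · simpa using (posSemidef_conjTranspose_mul_self (X * Tmat g t)).smul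
      (by positivity : (0 : ℝ) ≤ 1 / n)
  · simpa [sub_pos, sq_lt_one_iff_abs_lt_one] using ht (g i)

theorem betaT_eq (t : Fin J → ℝ) :
    betaT X g y t = (Lmat X g t)⁻¹ *ᵥ (((1 : ℝ) / n) • (Tmat g t *ᵥ (Xᵀ *ᵥ y))) := by
  rw [betaT, transpose_mul, (Tmat_isSymm g t).eq, mulVec_mulVec]

theorem bT_eq (t : Fin J → ℝ) :
    bT X g y t = Zmat X *ᵥ etaT X g y t - ((1 : ℝ) / n) • (Xᵀ *ᵥ y) := by
  rw [bT, aT, Zmat, sub_mulVec, smul_mulVec, one_mulVec]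
  abel

theorem one_div_mul_residual_dotProduct_mulVec (t : Fin J → ℝ) (v : Fin p → ℝ) :
    ((1 : ℝ) / n) * ((y - X *ᵥ etaT X g y t) ⬝ᵥ X *ᵥ v) = -(aT X g y t ⬝ᵥ v) := by
  rw [Matrix.dotProduct_mulVec, ← mulVec_transpose, ← smul_eq_mul, ← smul_dotProduct,
    ← neg_dotProduct, aT, mulVec_sub, mulVec_mulVec, smul_sub]
  congr 1
  abel

noncomputable def LmatDeriv (t s : Fin J → ℝ) : Matrix (Fin p) (Fin p) ℝ :=
  Tmat g s * Zmat X * Tmat g t + Tmat g t * Zmat X * Tmat g s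

noncomputable def betaTDeriv (t s : Fin J → ℝ) : Fin p → ℝ :=
  (Lmat X g t)⁻¹ *ᵥ (((1 : ℝ) / n) • (Tmat g s *ᵥ (Xᵀ *ᵥ y)) - LmatDeriv X g t s *ᵥ betaT X g y t)

noncomputable def etaTDeriv (t s : Fin J → ℝ) : Fin p → ℝ :=
  Tmat g s *ᵥ betaT X g y t + Tmat g t *ᵥ betaTDeriv X g y t s

theorem aT_dotProduct_etaTDeriv (t s : Fin J → ℝ) :
    aT X g y t ⬝ᵥ etaTDeriv X g y t s =
      betaT X g y t ⬝ᵥ Tmat g s *ᵥ (aT X g y t - dT X g y t) -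
        bT X g y t ⬝ᵥ Tmat g s *ᵥ cT X g y t := by
  have hE := Tmat_isSymm g s
  have hT := Tmat_isSymm g t
  have hc : cT X g y t = (Lmat X g t)⁻¹ *ᵥ (Tmat g t *ᵥ aT X g y t) := by
    rw [Tmat_mulVec]; rfl
  have hd : dT X g y t = Zmat X *ᵥ (Tmat g t *ᵥ cT X g y t) := by
    rw [Tmat_mulVec]; rfl
  have hβ : aT X g y t ⬝ᵥ etaTDeriv X g y t s = betaT X g y t ⬝ᵥ Tmat g s *ᵥ aT X g y t +
      cT X g y t ⬝ᵥ (((1 : ℝ) / n) • (Tmat g s *ᵥ (Xᵀ *ᵥ y)) -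
        LmatDeriv X g t s *ᵥ betaT X g y t) := by
    rw [etaTDeriv, betaTDeriv, dotProduct_add, hE.dotProduct_mulVec, dotProduct_comm,
      hT.dotProduct_mulVec, (Lmat_isSymm X g t).inv.dotProduct_mulVec, ← hc]
  have hL : cT X g y t ⬝ᵥ LmatDeriv X g t s *ᵥ betaT X g y t =
      Zmat X *ᵥ etaT X g y t ⬝ᵥ Tmat g s *ᵥ cT X g y t +
        betaT X g y t ⬝ᵥ Tmat g s *ᵥ dT X g y t := by
    have hEZT : cT X g y t ⬝ᵥ Tmat g s *ᵥ (Zmat X *ᵥ etaT X g y t) =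
        Zmat X *ᵥ etaT X g y t ⬝ᵥ Tmat g s *ᵥ cT X g y t := by
      rw [hE.dotProduct_mulVec, dotProduct_comm]
    have hTZE : cT X g y t ⬝ᵥ Tmat g t *ᵥ (Zmat X *ᵥ (Tmat g s *ᵥ betaT X g y t)) =
        betaT X g y t ⬝ᵥ Tmat g s *ᵥ dT X g y t := by
      rw [hT.dotProduct_mulVec, (Zmat_isSymm X).dotProduct_mulVec, ← hd, hE.dotProduct_mulVec,
        dotProduct_comm]
    rw [LmatDeriv, add_mulVec, dotProduct_add, ← mulVec_mulVec, ← mulVec_mulVec,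
      ← mulVec_mulVec, ← mulVec_mulVec, ← hEZT, ← hTZE]
    rfl
  have hw : cT X g y t ⬝ᵥ ((1 : ℝ) / n) • (Tmat g s *ᵥ (Xᵀ *ᵥ y)) =
      ((1 : ℝ) / n) * (Xᵀ *ᵥ y ⬝ᵥ Tmat g s *ᵥ cT X g y t) := by
    rw [dotProduct_smul, hE.dotProduct_mulVec, dotProduct_comm, smul_eq_mul]
  rw [hβ, dotProduct_sub, hL, hw, mulVec_sub, dotProduct_sub, bT_eq, sub_dotProduct,
    smul_dotProduct, smul_eq_mul]
  ring

end GroupScaling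

section Differentiation

-- The entrywise sup norm induces the product topology, so this instance only makes the
-- constant, sum and scalar rules for `HasDerivAt` available on matrices.
attribute [local instance] Matrix.normedAddCommGroup Matrix.normedSpace

theorem hasDerivAt_sum_sq_sub_mulVec {m k : Type*} [Fintype m] [Fintype k]
    (X : Matrix m k ℝ) (y : m → ℝ) {η : ℝ → k → ℝ} {η' : k → ℝ} {x : ℝ}
    (hη : HasDerivAt η η' x) :
    HasDerivAt (fun x => ∑ a, (y a - (X *ᵥ η x) a) ^ 2)
      (-2 * ((y - X *ᵥ η x) ⬝ᵥ X *ᵥ η')) x := by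
  have hr := hasDerivAt_pi.1 (((hasDerivAt_const x X).matrix_mulVec hη).const_sub y)
  refine (HasDerivAt.fun_sum fun a _ => (hr a).fun_pow 2).congr_deriv ?_
  simp only [zero_mulVec, zero_add, Pi.neg_apply, dotProduct, mul_sum]
  refine sum_congr rfl fun a _ => ?_
  push_cast
  ring

variable {n p J : ℕ} (X : Matrix (Fin n) (Fin p) ℝ) (g : Fin p → Fin J) (y : Fin n → ℝ)
  {τ : ℝ → Fin J → ℝ} {τ' : Fin J → ℝ} {x : ℝ}

theorem hasDerivAt_Tmat (hτ : HasDerivAt τ τ' x) :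
    HasDerivAt (fun x => Tmat g (τ x)) (Tmat g τ') x := by
  rw [Matrix.hasDerivAt_iff]
  intro i k
  by_cases h : i = k
  · subst h
    simpa [Tmat] using hasDerivAt_pi.1 hτ (g i)
  · simpa [Tmat, h] using hasDerivAt_const x (0 : ℝ)

theorem hasDerivAt_Lmat (hτ : HasDerivAt τ τ' x) :
    HasDerivAt (fun x => Lmat X g (τ x)) (LmatDeriv X g (τ x) τ') x := by
  have hT := hasDerivAt_Tmat g hτ
  refine (((hT.matrix_mul (hasDerivAt_const x (Zmat X))).matrix_mul hT).add_const 1).congr_deriv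
    ?_
  simp [LmatDeriv]

theorem hasDerivAt_betaT (hτ : HasDerivAt τ τ' x) (hL : IsUnit (Lmat X g (τ x))) :
    HasDerivAt (fun x => betaT X g y (τ x)) (betaTDeriv X g y (τ x) τ') x := by
  have hv := ((hasDerivAt_Tmat g hτ).matrix_mulVec (hasDerivAt_const x (Xᵀ *ᵥ y))).fun_const_smul
    ((1 : ℝ) / n)
  have hβ := ((hasDerivAt_Lmat X g hτ).matrix_inv hL).matrix_mulVec hv
  simp only [betaT_eq]
  convert hβ using 1
  simp only [betaTDeriv, betaT_eq, mulVec_zero, add_zero, mulVec_sub, neg_mulVec, mulVec_mulVec,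
    Matrix.mul_assoc]
  abel

theorem hasDerivAt_etaT (hτ : HasDerivAt τ τ' x) (hL : IsUnit (Lmat X g (τ x))) :
    HasDerivAt (fun x => etaT X g y (τ x)) (etaTDeriv X g y (τ x) τ') x :=
  (hasDerivAt_Tmat g hτ).matrix_mulVec (hasDerivAt_betaT X g y hτ hL)

theorem hasDerivAt_mean_sq_residual (hτ : HasDerivAt τ τ' x) (ht : ∀ j, |τ x j| < 1) :
    HasDerivAt
      (fun x => (1 / n : ℝ) * ∑ a, (y a - ((X * Tmat g (τ x)) *ᵥ betaT X g y (τ x)) a) ^ 2)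
      (2 * (betaT X g y (τ x) ⬝ᵥ Tmat g τ' *ᵥ (aT X g y (τ x) - dT X g y (τ x)) -
        bT X g y (τ x) ⬝ᵥ Tmat g τ' *ᵥ cT X g y (τ x))) x := by
  have hη := hasDerivAt_etaT X g y hτ (Lmat_posDef X g ht).isUnit
  simp only [← mulVec_mulVec]
  refine ((hasDerivAt_sum_sq_sub_mulVec X y hη).const_mul ((1 : ℝ) / n)).congr_deriv ?_
  rw [← aT_dotProduct_etaTDeriv]
  linear_combination
    (-2) * one_div_mul_residual_dotProduct_mulVec X g y (τ x) (etaTDeriv X g y (τ x) τ')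

end Differentiation

theorem objective_gradient_formula_general (n p J : ℕ) (lam : ℝ)
    (X : Matrix (Fin n) (Fin p) ℝ) (g : Fin p → Fin J) (y : Fin n → ℝ)
    (t : Fin J → ℝ) (ht : ∀ j, t j ∈ Set.Ioo (0 : ℝ) 1) (j : Fin J) :
    HasDerivAt
      (fun x : ℝ =>
        ((1 : ℝ) / n) *
            ∑ a, (y a - (X * Tmat g (Function.update t j x)).mulVec
                (betaT X g y (Function.update t j x)) a) ^ 2 +
          lam * ∑ j' : Fin J,
            Real.sqrt ((univ.filter fun i : Fin p => g i = j').card) *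
              Function.update t j x j')
      (2 * ((∑ i ∈ univ.filter fun i : Fin p => g i = j,
              betaT X g y t i * (aT X g y t i - dT X g y t i)) -
            ∑ i ∈ univ.filter fun i : Fin p => g i = j,
              bT X g y t i * cT X g y t i) +
        lam * Real.sqrt ((univ.filter fun i : Fin p => g i = j).card))
      (t j) := by
  have hτ := hasDerivAt_update t j (t j)
  have hcube : ∀ j', |Function.update t j (t j) j'| < 1 := by
    simpa using fun j' => abs_lt.2 ⟨by linarith [(ht j').1], (ht j').2⟩
  have hrss := hasDerivAt_mean_sq_residual X g y hτ hcube
  rw [Function.update_eq_self] at hrss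
  have hpen : HasDerivAt
      (fun x => ∑ j', Real.sqrt ((univ.filter fun i : Fin p => g i = j').card) *
        Function.update t j x j')
      (Real.sqrt ((univ.filter fun i : Fin p => g i = j).card)) (t j) := by
    refine (HasDerivAt.fun_sum fun j' _ => (hasDerivAt_pi.1 hτ j').const_mul _).congr_deriv ?_
    simp [Pi.single_apply]
  refine (hrss.add (hpen.const_mul lam)).congr_deriv ?_
  simp only [dotProduct_Tmat_single_mulVec, Pi.sub_apply]

/-- For `t` in the open cube `(0,1)^J`, the objective
`f_λ(t) = (1/n)‖y − X_t β̃_t‖₂² + λ Σ_j √(p_j) t_j` has gradient with `j`-th coordinate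
`2[β̃_{t,j}ᵀ (a_{t,j} − d_{t,j}) − b_{t,j}ᵀ c_{t,j}] + λ√(p_j)`, the block inner products
being sums over the indices of group `j` and `p_j` the size of group `j`. -/
theorem objective_gradient_formula (n p J : ℕ) (hn : 0 < n) (lam : ℝ) (hlam : 0 < lam)
    (X : Matrix (Fin n) (Fin p) ℝ) (g : Fin p → Fin J) (y : Fin n → ℝ)
    (t : Fin J → ℝ) (ht : ∀ j, t j ∈ Set.Ioo (0 : ℝ) 1) (j : Fin J) :
    HasDerivAt
      (fun x : ℝ =>
        ((1 : ℝ) / n) *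
            ∑ a, (y a - (X * Tmat g (Function.update t j x)).mulVec
                (betaT X g y (Function.update t j x)) a) ^ 2 +
          lam * ∑ j' : Fin J,
            Real.sqrt ((univ.filter fun i : Fin p => g i = j').card) *
              Function.update t j x j')
      (2 * ((∑ i ∈ univ.filter fun i : Fin p => g i = j,
              betaT X g y t i * (aT X g y t i - dT X g y t i)) -
            ∑ i ∈ univ.filter fun i : Fin p => g i = j,
              bT X g y t i * cT X g y t i) +
        lam * Real.sqrt ((univ.filter fun i : Fin p => g i = j).card))
      (t j) :=
  objective_gradient_formula_general n p J lam X g y t ht j
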